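/- Let m ≥ 1, X = Fin m, and let u denote the uniform pmf on X. Let Y be a nonempty finite type, K₁ and K₂ channels from X to Y, and 1 ≥ p₁ ≥ p₂ ≥ 0. For a pmf π on X write Δ(π) = I(X;Y)_{s₁(π)} − I(X;Y)_{s₂(π)}, where sₖ(π)(x,y) = π x · Kₖ x y, and write Δ_S(π) = I(X; Y × Bool)_{t₁(π)} − I(X; Y × Bool)_{t₂(π)}, where tⱼ(π)(x,(y,s)) = π x · N_{p_j} x (y,s). If Δ(π) ≤ Δ(u) for every pmf π on X, then Δ_S(π) ≤ Δ_S(u) for every pmf π on X. -/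

import Mathlib

/-- A pmf on a finite type: nonnegative and summing to 1. -/
def IsPMF {A : Type*} [Fintype A] (w : A → ℝ) : Prop :=
  (∀ a, 0 ≤ w a) ∧ ∑ a, w a = 1

/-- Shannon entropy (natural logarithm) of a pmf on a finite type. -/
noncomputable def entropy {A : Type*} [Fintype A] (w : A → ℝ) : ℝ :=
  ∑ a, Real.negMulLog (w a)

/-- Mutual information of a joint pmf on a product of finite types. -/
noncomputable def mutualInfo {A B : Type*} [Fintype A] [Fintype B] (r : A × B → ℝ) : ℝ :=
  entropy (fun a => ∑ b, r (a, b)) + entropy (fun b => ∑ a, r (a, b)) - entropy r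

/-- A channel from `X` to `Y`: each row is a pmf on `Y`. -/
def IsChannel {X Y : Type*} [Fintype Y] (K : X → Y → ℝ) : Prop :=
  ∀ x, IsPMF (K x)

/-- The joint pmf on `U × Z` induced by a joint pmf on `U × X` and a channel from `X` to `Z`. -/
noncomputable def induced {U X Z : Type*} [Fintype X] (p : U × X → ℝ) (K : X → Z → ℝ) :
    U × Z → ℝ := fun uz => ∑ x, p (uz.1, x) * K x uz.2

/-- The state-augmented mixture channel `N_q`: the state selects channel `K₁` with
probability `q` and `K₂` with probability `1 - q`, independently of the input, and the
output is the pair (channel output, state). -/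
noncomputable def mixChannel {X Y : Type*} (q : ℝ) (K₁ K₂ : X → Y → ℝ) :
    X → Y × Bool → ℝ := fun x ys => if ys.2 then q * K₁ x ys.1 else (1 - q) * K₂ x ys.1

/-- `Δ(π) = I(X;Y)_{K₁} − I(X;Y)_{K₂}` for input pmf `π`. -/
noncomputable def deltaMI {X Y : Type*} [Fintype X] [Fintype Y]
    (K₁ K₂ : X → Y → ℝ) (π : X → ℝ) : ℝ :=
  mutualInfo (fun xy : X × Y => π xy.1 * K₁ xy.1 xy.2) -
    mutualInfo (fun xy : X × Y => π xy.1 * K₂ xy.1 xy.2)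

/-- `Δ_S(π) = I(X;Y,S)_{N_{p₁}} − I(X;Y,S)_{N_{p₂}}` for input pmf `π`. -/
noncomputable def deltaMIState {X Y : Type*} [Fintype X] [Fintype Y]
    (p₁ p₂ : ℝ) (K₁ K₂ : X → Y → ℝ) (π : X → ℝ) : ℝ :=
  mutualInfo (fun xz : X × (Y × Bool) => π xz.1 * mixChannel p₁ K₁ K₂ xz.1 xz.2) -
    mutualInfo (fun xz : X × (Y × Bool) => π xz.1 * mixChannel p₂ K₁ K₂ xz.1 xz.2)

/-!
The input marginal is `π` for `K₁`, `K₂` and `N_q` alike. Conditioning on the state splits the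
joint and the output entropy of `N_q` into `q` times the entropy for `K₁`, `(1 - q)` times the
entropy for `K₂`, and the mixing terms `negMulLog q`, `negMulLog (1 - q)` weighted by total
masses. These masses agree in the joint and the output entropy, so the mixing terms cancel and
`I(X; Y, S)_{N_q} = q I(X; Y)_{K₁} + (1 - q) I(X; Y)_{K₂}` for every input `π`.
Hence `Δ_S = (p₁ - p₂) Δ`, and dominance transfers because `p₁ - p₂ ≥ 0`.
-/

open Finset

noncomputable def boolMix {A : Type*} (q : ℝ) (f g : A → ℝ) : A × Bool → ℝ :=
  fun as => if as.2 then q * f as.1 else (1 - q) * g as.1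

lemma sum_negMulLog_const_mul {A : Type*} [Fintype A] (c : ℝ) (w : A → ℝ) :
    ∑ a, Real.negMulLog (c * w a) = c * entropy w + (∑ a, w a) * Real.negMulLog c := by
  simp only [Real.negMulLog_mul, sum_add_distrib, entropy, ← mul_sum, ← sum_mul]
  ring

lemma entropy_boolMix {A : Type*} [Fintype A] (q : ℝ) (f g : A → ℝ) :
    entropy (boolMix q f g) = q * entropy f + (1 - q) * entropy g
      + (∑ a, f a) * Real.negMulLog q + (∑ a, g a) * Real.negMulLog (1 - q) := by
  simp only [entropy, boolMix, Fintype.sum_prod_type, Fintype.sum_bool, if_true,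
    Bool.false_eq_true, if_false, sum_add_distrib, sum_negMulLog_const_mul]
  ring

lemma entropy_comp_equiv {A B : Type*} [Fintype A] [Fintype B] (e : A ≃ B) (w : B → ℝ) :
    entropy (w ∘ e) = entropy w :=
  e.sum_comp (fun b => Real.negMulLog (w b))

lemma sum_mul_eq_of_sum_eq_one {X Z : Type*} [Fintype Z] (π : X → ℝ) (K : X → Z → ℝ)
    (hK : ∀ x, ∑ z, K x z = 1) : (fun x => ∑ z, π x * K x z) = π := by
  funext x
  rw [← mul_sum, hK, mul_one]

lemma sum_mixChannel {X Y : Type*} [Fintype Y] (q : ℝ) {K₁ K₂ : X → Y → ℝ}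
    (hK₁ : ∀ x, ∑ y, K₁ x y = 1) (hK₂ : ∀ x, ∑ y, K₂ x y = 1) (x : X) :
    ∑ z, mixChannel q K₁ K₂ x z = 1 := by
  simp only [mixChannel, Fintype.sum_prod_type, Fintype.sum_bool, if_true, Bool.false_eq_true,
    if_false, sum_add_distrib, ← mul_sum, hK₁, hK₂]
  ring

lemma output_mixChannel {X Y : Type*} [Fintype X] (q : ℝ) (K₁ K₂ : X → Y → ℝ) (π : X → ℝ) :
    (fun z : Y × Bool => ∑ x, π x * mixChannel q K₁ K₂ x z) =
      boolMix q (fun y => ∑ x, π x * K₁ x y) (fun y => ∑ x, π x * K₂ x y) := by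
  funext ⟨y, s⟩
  cases s <;> simp only [mixChannel, boolMix, if_true, Bool.false_eq_true, if_false, mul_sum] <;>
    exact sum_congr rfl fun _ _ => by ring

section MixChannel

variable {X Y : Type*} [Fintype X] [Fintype Y] (q : ℝ) (K₁ K₂ : X → Y → ℝ) (π : X → ℝ)

lemma entropy_joint_mixChannel :
    entropy (fun xz : X × (Y × Bool) => π xz.1 * mixChannel q K₁ K₂ xz.1 xz.2) =
      entropy (boolMix q (fun xy : X × Y => π xy.1 * K₁ xy.1 xy.2)
        (fun xy => π xy.1 * K₂ xy.1 xy.2)) := by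
  rw [← entropy_comp_equiv (Equiv.prodAssoc X Y Bool)]
  congr 1
  funext ⟨⟨x, y⟩, s⟩
  cases s <;> simp only [Function.comp, Equiv.prodAssoc_apply, mixChannel, boolMix,
    if_true, Bool.false_eq_true, if_false] <;> ring

lemma mutualInfo_mixChannel (hK₁ : ∀ x, ∑ y, K₁ x y = 1) (hK₂ : ∀ x, ∑ y, K₂ x y = 1) :
    mutualInfo (fun xz : X × (Y × Bool) => π xz.1 * mixChannel q K₁ K₂ xz.1 xz.2) =
      q * mutualInfo (fun xy : X × Y => π xy.1 * K₁ xy.1 xy.2)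
        + (1 - q) * mutualInfo (fun xy : X × Y => π xy.1 * K₂ xy.1 xy.2) := by
  have hmass : ∀ K : X → Y → ℝ, ∑ y, ∑ x, π x * K x y = ∑ xy : X × Y, π xy.1 * K xy.1 xy.2 :=
    fun K => by rw [sum_comm, Fintype.sum_prod_type]
  simp only [mutualInfo]
  rw [entropy_joint_mixChannel, output_mixChannel, entropy_boolMix, entropy_boolMix,
    sum_mul_eq_of_sum_eq_one π _ (sum_mixChannel q hK₁ hK₂), sum_mul_eq_of_sum_eq_one π _ hK₁,
    sum_mul_eq_of_sum_eq_one π _ hK₂, hmass, hmass]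
  ring

lemma deltaMIState_eq_mul_deltaMI (p₁ p₂ : ℝ) (hK₁ : ∀ x, ∑ y, K₁ x y = 1)
    (hK₂ : ∀ x, ∑ y, K₂ x y = 1) :
    deltaMIState p₁ p₂ K₁ K₂ π = (p₁ - p₂) * deltaMI K₁ K₂ π := by
  simp only [deltaMIState, deltaMI, mutualInfo_mixChannel _ _ _ _ hK₁ hK₂]
  ring

end MixChannel

theorem mixChannel_dominance_general {m : ℕ} {Y : Type*} [Fintype Y]
    (K₁ K₂ : Fin m → Y → ℝ) (hK₁ : IsChannel K₁) (hK₂ : IsChannel K₂)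
    (p₁ p₂ : ℝ) (hle : p₂ ≤ p₁)
    (hdom : ∀ π : Fin m → ℝ, IsPMF π →
      deltaMI K₁ K₂ π ≤ deltaMI K₁ K₂ (fun _ => (m : ℝ)⁻¹)) :
    ∀ π : Fin m → ℝ, IsPMF π →
      deltaMIState p₁ p₂ K₁ K₂ π ≤ deltaMIState p₁ p₂ K₁ K₂ (fun _ => (m : ℝ)⁻¹) := by
  intro π hπ
  have hrows₁ : ∀ x, ∑ y, K₁ x y = 1 := fun x => (hK₁ x).2
  have hrows₂ : ∀ x, ∑ y, K₂ x y = 1 := fun x => (hK₂ x).2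
  rw [deltaMIState_eq_mul_deltaMI K₁ K₂ π p₁ p₂ hrows₁ hrows₂,
    deltaMIState_eq_mul_deltaMI K₁ K₂ _ p₁ p₂ hrows₁ hrows₂]
  exact mul_le_mul_of_nonneg_left (hdom π hπ) (sub_nonneg.mpr hle)

/-- Dominance part of Theorem 3(iv): if the mutual-information difference of the channel
components is maximized at the uniform input, the same holds for the state-augmented
channels. -/
theorem mixChannel_dominance {m : ℕ} (hm : 1 ≤ m) {Y : Type*} [Fintype Y] [Nonempty Y]
    (K₁ K₂ : Fin m → Y → ℝ) (hK₁ : IsChannel K₁) (hK₂ : IsChannel K₂)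
    (p₁ p₂ : ℝ) (hp₂ : 0 ≤ p₂) (hle : p₂ ≤ p₁) (hp₁ : p₁ ≤ 1)
    (hdom : ∀ π : Fin m → ℝ, IsPMF π →
      deltaMI K₁ K₂ π ≤ deltaMI K₁ K₂ (fun _ => (m : ℝ)⁻¹)) :
    ∀ π : Fin m → ℝ, IsPMF π →
      deltaMIState p₁ p₂ K₁ K₂ π ≤ deltaMIState p₁ p₂ K₁ K₂ (fun _ => (m : ℝ)⁻¹) :=
  mixChannel_dominance_general K₁ K₂ hK₁ hK₂ p₁ p₂ hle hdom
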